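/- In an infinitary pretopos, all small colimits are universal: for every small diagram D with colimit L, every object Y, and every morphism Y → L, the pullback of the diagram D along Y → L has colimit Y. In particular, coequalizers of arbitrary parallel pairs are stable under pullback. -/

import Mathlib

/-!
A colimit cocone `c` of `F` exhibits `c.pt` as the coequalizer of the pairs `(x, F.map φ x)` on
`∐ F.obj`, and since coproducts are universal, pulling this presentation back along
`f : c'.pt ⟶ c.pt` gives the corresponding presentation of `c'`. So everything rests on the
pullback stability of coequalizers.

Let `q : A ⟶ Q` be the coequalizer of a span `S` on `A`. The image `E ↪ A ⨯ A` of the union of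
the powers of `S ∪ Sᵒᵖ` is an equivalence relation: reflexivity, symmetry and transitivity can be
checked locally (after a regular-epi cover and a decomposition into coproduct summands), where
they hold for finite zigzags of `S`-steps. The quotient of the effective relation `E` coequalizes
`S`, hence factors through `q`, so the kernel pair of `q` lies in `E`: points identified by `q`
are locally joined by a zigzag. Such a zigzag lifts step by step along a pullback `q'` of `q`,
so a map respecting the pulled-back generating pairs respects the kernel pair of `q'`, which is
again an effective epimorphism; hence the map factors through `q'`.
-/

open CategoryTheory CategoryTheory.Limits

universe v u

/-- The pre-2025 Mathlib notion (binary): the coproduct of `X₁` and `X₂` is disjoint.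
(Mathlib's `CoproductDisjoint` now has another meaning and signature.) -/
class OldCoproductDisjoint {C : Type u} [Category.{v} C] (X₁ X₂ : C) where
  isInitialOfIsPullbackOfIsCoproduct :
    ∀ {X Z : C} {pX₁ : X₁ ⟶ X} {pX₂ : X₂ ⟶ X} {f : Z ⟶ X₁} {g : Z ⟶ X₂}
      {comm : f ≫ pX₁ = g ≫ pX₂},
      IsColimit (BinaryCofan.mk pX₁ pX₂) → IsLimit (PullbackCone.mk _ _ comm) → IsInitial Z
  mono_inl : ∀ (X : C) (X₁ : X₁ ⟶ X) (X₂ : X₂ ⟶ X) (_ : IsColimit (BinaryCofan.mk X₁ X₂)),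
    Mono X₁
  mono_inr : ∀ (X : C) (X₁ : X₁ ⟶ X) (X₂ : X₂ ⟶ X) (_ : IsColimit (BinaryCofan.mk X₁ X₂)),
    Mono X₂

/-- The pre-2025 Mathlib notion: `C` has disjoint (binary) coproducts. -/
class CoproductsDisjoint (C : Type u) [Category.{v} C] where
  CoproductDisjoint : ∀ X Y : C, OldCoproductDisjoint X Y

variable (C : Type u) [Category.{v} C] [HasFiniteLimits C]

/-- An equivalence groupoid in `C`: a pair of objects with a monomorphism
`X₁ ⟶ X₀ ⨯ X₀` which is an internal equivalence relation. -/
structure EqGpd where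
  X₀ : C
  X₁ : C
  d₀ : X₁ ⟶ X₀
  d₁ : X₁ ⟶ X₀
  mono : Mono (prod.lift d₀ d₁)
  refl : ∀ (T : C) (x : T ⟶ X₀), ∃ h : T ⟶ X₁, h ≫ d₀ = x ∧ h ≫ d₁ = x
  symm : ∀ (T : C) (x y : T ⟶ X₀), (∃ h : T ⟶ X₁, h ≫ d₀ = x ∧ h ≫ d₁ = y) →
    ∃ h : T ⟶ X₁, h ≫ d₀ = y ∧ h ≫ d₁ = x
  trans : ∀ (T : C) (x y z : T ⟶ X₀),
    (∃ h : T ⟶ X₁, h ≫ d₀ = x ∧ h ≫ d₁ = y) →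
    (∃ h : T ⟶ X₁, h ≫ d₀ = y ∧ h ≫ d₁ = z) →
    ∃ h : T ⟶ X₁, h ≫ d₀ = x ∧ h ≫ d₁ = z

namespace EqGpd

variable {C}

/-- A morphism of equivalence groupoids. -/
@[ext]
structure Hom (A B : EqGpd C) where
  f₀ : A.X₀ ⟶ B.X₀
  f₁ : A.X₁ ⟶ B.X₁
  w₀ : f₁ ≫ B.d₀ = A.d₀ ≫ f₀
  w₁ : f₁ ≫ B.d₁ = A.d₁ ≫ f₀

instance : Category (EqGpd C) where
  Hom A B := Hom A B
  id A := ⟨𝟙 _, 𝟙 _, by simp, by simp⟩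
  comp {A B D} f g := ⟨f.f₀ ≫ g.f₀, f.f₁ ≫ g.f₁,
    by rw [Category.assoc, g.w₀, ← Category.assoc, f.w₀, Category.assoc],
    by rw [Category.assoc, g.w₁, ← Category.assoc, f.w₁, Category.assoc]⟩
  id_comp f := by apply Hom.ext <;> simp
  comp_id f := by apply Hom.ext <;> simp
  assoc f g h := by apply Hom.ext <;> simp

@[simp] lemma comp_f₀ {A B D : EqGpd C} (f : A ⟶ B) (g : B ⟶ D) :
    (f ≫ g).f₀ = f.f₀ ≫ g.f₀ := rfl

@[simp] lemma comp_f₁ {A B D : EqGpd C} (f : A ⟶ B) (g : B ⟶ D) :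
    (f ≫ g).f₁ = f.f₁ ≫ g.f₁ := rfl

@[simp] lemma id_f₀ (A : EqGpd C) : (𝟙 A : A ⟶ A).f₀ = 𝟙 A.X₀ := rfl

@[simp] lemma id_f₁ (A : EqGpd C) : (𝟙 A : A ⟶ A).f₁ = 𝟙 A.X₁ := rfl

/-- The homotopy relation on morphisms of equivalence groupoids. -/
def htpy : HomRel (EqGpd C) := fun {A B} f g =>
  ∃ h : A.X₀ ⟶ B.X₁, h ≫ B.d₀ = f.f₀ ∧ h ≫ B.d₁ = g.f₀

/-- The embedding of `C` into equivalence groupoids via diagonals. -/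
def disc : C ⥤ EqGpd C where
  obj X :=
    { X₀ := X
      X₁ := X
      d₀ := 𝟙 X
      d₁ := 𝟙 X
      mono := ⟨fun {Z} g h w => by
        have := congrArg (fun t => t ≫ (prod.fst : X ⨯ X ⟶ X)) w
        simp at this
        erw [prod.lift_fst, prod.lift_fst] at this
        exact this⟩
      refl := fun T x => ⟨x, by simp, by simp⟩
      symm := fun T x y ⟨h, h0, h1⟩ => ⟨h, by simpa using h1, by simpa using h0⟩
      trans := fun T x y z ⟨h, h0, h1⟩ ⟨k, k0, k1⟩ =>
        ⟨h, h0, by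
          simp only [Category.comp_id] at h0 h1 k0 k1 ⊢
          rw [h1, ← k0]; exact k1⟩ }
  map {X Y} u := ⟨u, u, by simp, by simp⟩
  map_id X := by apply Hom.ext <;> simp
  map_comp f g := by apply Hom.ext <;> simp

end EqGpd

/-- `f` is an effective epimorphism: it is the coequalizer of its kernel pair. -/
def IsEffectiveEpi {X Y : C} (f : X ⟶ Y) : Prop :=
  ∃ w : pullback.fst f f ≫ f = pullback.snd f f ≫ f,
    Nonempty (IsColimit (Cofork.ofπ f w))


namespace InfinitaryPretopos

variable {C}

/-! ## Effective epimorphisms and exactness -/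

theorem isEffectiveEpi_iff_isRegularEpi {X Y : C} (f : X ⟶ Y) :
    IsEffectiveEpi C f ↔ IsRegularEpi f :=
  ⟨fun ⟨_, ⟨hc⟩⟩ => ⟨⟨regularEpiOfKernelPair f hc⟩⟩,
    fun _ => ⟨pullback.condition, ⟨isColimitCoforkOfEffectiveEpi f _ (pullback.isLimit f f)⟩⟩⟩

def _root_.EqGpd.ofIsKernelPair {X Y Z : C} {f : X ⟶ Y} {a b : Z ⟶ X}
    (h : IsKernelPair f a b) : EqGpd C where
  X₀ := X
  X₁ := Z
  d₀ := a
  d₁ := b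
  mono := ⟨fun u v huv => h.hom_ext (by simpa [prod.lift_fst] using huv =≫ prod.fst)
    (by simpa [prod.lift_snd] using huv =≫ prod.snd)⟩
  refl _ x := ⟨h.lift x x rfl, by simp, by simp⟩
  symm _ x y := by
    rintro ⟨w, rfl, rfl⟩
    exact ⟨h.lift (w ≫ b) (w ≫ a) (by simp [h.w]), by simp, by simp⟩
  trans _ x y z := by
    rintro ⟨w, rfl, rfl⟩ ⟨w', hw', rfl⟩
    exact ⟨h.lift (w ≫ a) (w' ≫ b)
      (by rw [Category.assoc, Category.assoc, h.w, ← reassoc_of% hw', h.w]), by simp, by simp⟩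

variable (C) in
/-- The axioms of an infinitary pretopos other than disjointness of coproducts: a Barr-exact
category whose small coproducts are universal. -/
structure IsExactWithUniversalCoproducts : Prop where
  isUniversalColimit_cofan : ∀ {J : Type v} (F : Discrete J ⥤ C) (c : Cocone F),
    IsColimit c → IsUniversalColimit c
  effective : ∀ A : EqGpd C, ∃ (Q : C) (q : A.X₀ ⟶ Q) (w : A.d₀ ≫ q = A.d₁ ≫ q),
    Nonempty (IsColimit (Cofork.ofπ q w)) ∧ IsIso (pullback.lift A.d₀ A.d₁ w)
  stable : ∀ {X Y Z : C} (f : X ⟶ Y) (g : Z ⟶ Y),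
    IsEffectiveEpi C f → IsEffectiveEpi C (pullback.snd f g)

namespace IsExactWithUniversalCoproducts

variable (hC : IsExactWithUniversalCoproducts C)
include hC

theorem regular : Regular C where
  hasCoequalizer_of_isKernelPair h := by
    obtain ⟨Q, q, w, ⟨hq⟩, -⟩ := hC.effective (EqGpd.ofIsKernelPair h)
    exact ⟨⟨⟨_, hq⟩⟩⟩
  regularEpiIsStableUnderBaseChange :=
    .of_forall_exists_isPullback fun f g _ hg => ⟨_, _, _, (IsPullback.of_hasPullback g f).flip,
      (isEffectiveEpi_iff_isRegularEpi _).1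
        (hC.stable g f ((isEffectiveEpi_iff_isRegularEpi g).2 hg))⟩

theorem isRegularEpi_of_isPullback {X Y Y' S : C} {f : X ⟶ S} {g : Y ⟶ S} {f' : Y' ⟶ Y}
    {g' : Y' ⟶ X} (sq : IsPullback f' g' g f) [IsRegularEpi g] : IsRegularEpi g' :=
  hC.regular.regularEpiIsStableUnderBaseChange.of_isPullback sq ‹_›

variable [∀ J : Type v, HasColimitsOfShape (Discrete J) C]

theorem isColimit_cofan_pullback {ι : Type v} (X : ι → C) {T : C} (w : T ⟶ ∐ X) :
    Nonempty (IsColimit (Cofan.mk T fun i => pullback.snd (Sigma.ι X i) w)) :=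
  hC.isUniversalColimit_cofan _ _ (colimit.isColimit (Discrete.functor X)) _
    (Discrete.natTrans fun i => pullback.fst (Sigma.ι X i.as) w) w
    (by ext ⟨i⟩; exact pullback.condition) (.of_discrete _)
    (fun ⟨i⟩ => (IsPullback.of_hasPullback (Sigma.ι X i) w).flip)

theorem hom_ext_of_sigma {ι : Type v} {X : ι → C} {T W : C} (w : T ⟶ ∐ X) {a b : T ⟶ W}
    (h : ∀ i {P : C} (u : P ⟶ X i) (v : P ⟶ T), u ≫ Sigma.ι X i = v ≫ w → v ≫ a = v ≫ b) :
    a = b := by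
  obtain ⟨hc⟩ := hC.isColimit_cofan_pullback X w
  exact Cofan.IsColimit.hom_ext hc _ _ fun i => h i _ _ pullback.condition

theorem exists_lift_of_sigma {ι : Type v} {X : ι → C} {T E M : C} (w : T ⟶ ∐ X)
    {m : E ⟶ M} [Mono m] {g : T ⟶ M}
    (h : ∀ i {P : C} (u : P ⟶ X i) (v : P ⟶ T), u ≫ Sigma.ι X i = v ≫ w →
      ∃ τ : P ⟶ E, τ ≫ m = v ≫ g) :
    ∃ τ : T ⟶ E, τ ≫ m = g := by
  obtain ⟨hc⟩ := hC.isColimit_cofan_pullback X w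
  choose τ hτ using fun i => h i _ _ pullback.condition
  exact ⟨Cofan.IsColimit.desc hc τ,
    Cofan.IsColimit.hom_ext hc _ _ fun i => (Cofan.IsColimit.fac_assoc hc τ i m).trans (hτ i)⟩

theorem isPullback_sigmaMap {ι : Type v} {X X' : ι → C} {Y Y' : C}
    (g : ∀ i, X i ⟶ Y) (g' : ∀ i, X' i ⟶ Y') (a : ∀ i, X' i ⟶ X i) (f : Y' ⟶ Y)
    (h : ∀ i, IsPullback (a i) (g' i) (g i) f) :
    IsPullback (Limits.Sigma.map a) (Sigma.desc g') (Sigma.desc g) f := by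
  have := (hC.isUniversalColimit_cofan _ _ (coproductIsCoproduct X)).isPullback_of_isColimit_right
    g (Sigma.desc g) f a g' h (coproductIsCoproduct X') (by simp)
  have e₁ : Cofan.IsColimit.desc (coproductIsCoproduct X') (fun i => a i ≫ Sigma.ι X i) =
      Limits.Sigma.map a :=
    Sigma.hom_ext _ _ fun i => by simpa using Cofan.IsColimit.fac (coproductIsCoproduct X') _ i
  have e₂ : Cofan.IsColimit.desc (coproductIsCoproduct X') g' = Sigma.desc g' :=
    Sigma.hom_ext _ _ fun i => by simpa using Cofan.IsColimit.fac (coproductIsCoproduct X') g' i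
  rw [← e₁, ← e₂]
  exact this

end IsExactWithUniversalCoproducts

/-! ## Relations given by spans -/

/-- An internal relation on `A` whose legs need not be jointly monic. -/
structure EndoSpan (A : C) where
  X : C
  l : X ⟶ A
  r : X ⟶ A

namespace EndoSpan

variable {A : C}

def Rel (S : EndoSpan A) {T : C} (x y : T ⟶ A) : Prop :=
  ∃ w : T ⟶ S.X, w ≫ S.l = x ∧ w ≫ S.r = y

def IsSymm (S : EndoSpan A) : Prop :=
  ∀ ⦃T : C⦄ (x y : T ⟶ A), S.Rel x y → S.Rel y x

protected abbrev id (A : C) : EndoSpan A := ⟨A, 𝟙 A, 𝟙 A⟩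

noncomputable abbrev comp (S S' : EndoSpan A) : EndoSpan A :=
  ⟨pullback S.r S'.l, pullback.fst _ _ ≫ S.l, pullback.snd _ _ ≫ S'.r⟩

noncomputable def pow (S : EndoSpan A) : ℕ → EndoSpan A
  | 0 => .id A
  | n + 1 => (S.pow n).comp S

variable {S : EndoSpan A} {T : C}

omit [HasFiniteLimits C] in
theorem Rel.precomp {x y : T ⟶ A} (h : S.Rel x y) {T' : C} (v : T' ⟶ T) :
    S.Rel (v ≫ x) (v ≫ y) := by
  obtain ⟨w, rfl, rfl⟩ := h
  exact ⟨v ≫ w, by simp, by simp⟩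

theorem rel_iff_exists_lift (x y : T ⟶ A) :
    S.Rel x y ↔ ∃ w : T ⟶ S.X, w ≫ prod.lift S.l S.r = prod.lift x y := by
  refine ⟨fun ⟨w, hl, hr⟩ => ⟨w, by ext <;> simp [hl, hr]⟩, fun ⟨w, hw⟩ => ⟨w, ?_, ?_⟩⟩
  · simpa [prod.lift_fst] using hw =≫ prod.fst
  · simpa [prod.lift_snd] using hw =≫ prod.snd

omit [HasFiniteLimits C] in
theorem rel_id_iff {x y : T ⟶ A} : (EndoSpan.id A).Rel x y ↔ x = y :=
  ⟨fun ⟨_, hl, hr⟩ => hl.symm.trans hr, fun h => ⟨x, by simp, by simp [h]⟩⟩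

theorem rel_comp_iff {S' : EndoSpan A} {x z : T ⟶ A} :
    (S.comp S').Rel x z ↔ ∃ y, S.Rel x y ∧ S'.Rel y z := by
  constructor
  · rintro ⟨w, rfl, rfl⟩
    exact ⟨w ≫ pullback.fst _ _ ≫ S.r,
      ⟨w ≫ pullback.fst _ _, Category.assoc _ _ _, Category.assoc _ _ _⟩,
      ⟨w ≫ pullback.snd _ _, by rw [Category.assoc, ← pullback.condition], Category.assoc _ _ _⟩⟩
  · rintro ⟨y, ⟨w, rfl, rfl⟩, ⟨w', hw', rfl⟩⟩
    exact ⟨pullback.lift w w' hw'.symm, pullback.lift_fst_assoc _ _ _ _,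
      pullback.lift_snd_assoc _ _ _ _⟩

theorem rel_pow_one {x y : T ⟶ A} (h : S.Rel x y) : (S.pow 1).Rel x y :=
  rel_comp_iff.2 ⟨x, rel_id_iff.2 rfl, h⟩

theorem Rel.pow_add {n m : ℕ} {x y z : T ⟶ A} (h : (S.pow n).Rel x y)
    (h' : (S.pow m).Rel y z) : (S.pow (n + m)).Rel x z := by
  induction m generalizing z with
  | zero => exact rel_id_iff.1 h' ▸ h
  | succ m ih =>
    obtain ⟨y', hy, hy'⟩ := rel_comp_iff.1 h'
    exact rel_comp_iff.2 ⟨y', ih hy, hy'⟩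

theorem Rel.pow_symm (hS : S.IsSymm) {n : ℕ} {x y : T ⟶ A} (h : (S.pow n).Rel x y) :
    (S.pow n).Rel y x := by
  induction n generalizing y with
  | zero => exact rel_id_iff.2 (rel_id_iff.1 h).symm
  | succ n ih =>
    obtain ⟨y', hy, hy'⟩ := rel_comp_iff.1 h
    simpa [Nat.add_comm] using (rel_pow_one (hS _ _ hy')).pow_add (ih hy)

theorem Rel.comp_eq_comp_of_pow {Q : C} {q : A ⟶ Q} (hq : S.l ≫ q = S.r ≫ q) {n : ℕ}
    {x y : T ⟶ A} (h : (S.pow n).Rel x y) : x ≫ q = y ≫ q := by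
  induction n generalizing y with
  | zero => rw [rel_id_iff.1 h]
  | succ n ih =>
    obtain ⟨y', hy, w, rfl, rfl⟩ := rel_comp_iff.1 h
    simp [ih hy, hq]

variable [∀ J : Type v, HasColimitsOfShape (Discrete J) C]

noncomputable abbrev symmClosure (S : EndoSpan A) : EndoSpan A :=
  ⟨∐ fun _ : ULift.{v} Bool => S.X, Sigma.desc fun b => cond b.down S.l S.r,
    Sigma.desc fun b => cond b.down S.r S.l⟩

noncomputable abbrev reflTransGen (S : EndoSpan A) : EndoSpan A :=
  ⟨∐ fun n : ULift.{v} ℕ => (S.pow n.down).X, Sigma.desc fun n => (S.pow n.down).l,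
    Sigma.desc fun n => (S.pow n.down).r⟩

omit [HasFiniteLimits C] in
theorem isSymm_symmClosure (S : EndoSpan A) : S.symmClosure.IsSymm := by
  rintro T _ _ ⟨w, rfl, rfl⟩
  refine ⟨w ≫ Sigma.desc fun b => Sigma.ι (fun _ : ULift.{v} Bool => S.X) ⟨!b.down⟩, ?_, ?_⟩ <;>
    · rw [Category.assoc]
      congr 1
      ext ⟨_ | _⟩ <;> simp

omit [HasFiniteLimits C] in
theorem symmClosure_l_comp_eq {Q : C} {q : A ⟶ Q} (hq : S.l ≫ q = S.r ≫ q) :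
    S.symmClosure.l ≫ q = S.symmClosure.r ≫ q := by
  ext ⟨_ | _⟩ <;> simp [hq]

omit [HasFiniteLimits C] in
theorem Rel.symmClosure {x y : T ⟶ A} (h : S.Rel x y) : S.symmClosure.Rel x y := by
  obtain ⟨w, rfl, rfl⟩ := h
  exact ⟨w ≫ Sigma.ι (fun _ : ULift.{v} Bool => S.X) ⟨true⟩, by simp, by simp⟩

theorem Rel.reflTransGen {n : ℕ} {x y : T ⟶ A} (h : (S.pow n).Rel x y) :
    S.reflTransGen.Rel x y := by
  obtain ⟨w, rfl, rfl⟩ := h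
  exact ⟨w ≫ Sigma.ι (fun n : ULift.{v} ℕ => (S.pow n.down).X) ⟨n⟩, by simp, by simp⟩

end EndoSpan

/-! ## The equivalence relation generated by a span -/

namespace EndoSpan

variable {A : C}

structure IsImage (R E : EndoSpan A) : Prop where
  mono : Mono (prod.lift E.l E.r)
  cover : ∃ e : R.X ⟶ E.X, IsRegularEpi e ∧ e ≫ E.l = R.l ∧ e ≫ E.r = R.r

theorem Rel.of_precomp_isRegularEpi {E : EndoSpan A} [Mono (prod.lift E.l E.r)] {T T' : C}
    (p : T' ⟶ T) [IsRegularEpi p] {x y : T ⟶ A} (h : E.Rel (p ≫ x) (p ≫ y)) : E.Rel x y := by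
  rw [rel_iff_exists_lift] at h ⊢
  obtain ⟨τ, hτ⟩ := h
  have sq : CommSq τ p (prod.lift E.l E.r) (prod.lift x y) := ⟨by simp [hτ]⟩
  exact ⟨sq.lift, sq.fac_right⟩

theorem IsImage.rel {R E : EndoSpan A} (hE : R.IsImage E) {T : C} {x y : T ⟶ A}
    (h : R.Rel x y) : E.Rel x y := by
  obtain ⟨e, -, hl, hr⟩ := hE.cover
  obtain ⟨w, rfl, rfl⟩ := h
  exact ⟨w ≫ e, by simp [hl], by simp [hr]⟩

variable (hC : IsExactWithUniversalCoproducts C)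
include hC

theorem exists_isImage (R : EndoSpan A) : ∃ E : EndoSpan A, R.IsImage E := by
  have := hC.regular
  let F := Regular.strongEpiMonoFactorisation (prod.lift R.l R.r)
  refine ⟨⟨F.I, F.m ≫ prod.fst, F.m ≫ prod.snd⟩,
    { mono := ?_, cover := ⟨F.e, inferInstance, ?_, ?_⟩ }⟩
  · have : prod.lift (F.m ≫ prod.fst) (F.m ≫ prod.snd) = F.m := by
      ext <;> simp [prod.lift_fst, prod.lift_snd]
    change Mono (prod.lift (F.m ≫ prod.fst) (F.m ≫ prod.snd))
    rw [this]
    infer_instance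
  · simp [F.fac_assoc, prod.lift_fst]
  · simp [F.fac_assoc, prod.lift_snd]

theorem IsImage.exists_isRegularEpi_rel {R E : EndoSpan A} (hE : R.IsImage E) {T : C}
    {x y : T ⟶ A} (h : E.Rel x y) :
    ∃ (T' : C) (p : T' ⟶ T), IsRegularEpi p ∧ R.Rel (p ≫ x) (p ≫ y) := by
  obtain ⟨e, he, hl, hr⟩ := hE.cover
  obtain ⟨τ, rfl, rfl⟩ := h
  exact ⟨_, pullback.snd e τ, hC.isRegularEpi_of_isPullback (.of_hasPullback e τ),
    pullback.fst e τ, by simp [← hl, pullback.condition_assoc],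
    by simp [← hr, pullback.condition_assoc]⟩

variable [∀ J : Type v, HasColimitsOfShape (Discrete J) C]

theorem Rel.of_sigma {E : EndoSpan A} [Mono (prod.lift E.l E.r)] {ι : Type v} {X : ι → C}
    {T : C} (w : T ⟶ ∐ X) {x y : T ⟶ A}
    (h : ∀ i {P : C} (u : P ⟶ X i) (v : P ⟶ T), u ≫ Sigma.ι X i = v ≫ w →
      E.Rel (v ≫ x) (v ≫ y)) :
    E.Rel x y := by
  simp only [rel_iff_exists_lift, ← prod.comp_lift] at h ⊢
  exact hC.exists_lift_of_sigma w h

variable {S E : EndoSpan A} (hE : S.reflTransGen.IsImage E)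
include hE

theorem IsImage.rel_induction {T : C} {x y x' y' : T ⟶ A} (h : E.Rel x y)
    (H : ∀ {P : C} (v : P ⟶ T) (n : ℕ), (S.pow n).Rel (v ≫ x) (v ≫ y) →
      E.Rel (v ≫ x') (v ≫ y')) :
    E.Rel x' y' := by
  have := hE.mono
  obtain ⟨T', p, hp, w, hl, hr⟩ := hE.exists_isRegularEpi_rel hC h
  refine Rel.of_precomp_isRegularEpi p (Rel.of_sigma hC w fun ⟨n⟩ P u v huw => ?_)
  simpa using H (v ≫ p) n ⟨u, by simpa [← hl] using huw =≫ S.reflTransGen.l,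
    by simpa [← hr] using huw =≫ S.reflTransGen.r⟩

omit hC in
theorem IsImage.refl {T : C} (x : T ⟶ A) : E.Rel x x :=
  hE.rel (Rel.reflTransGen (n := 0) (rel_id_iff.2 rfl))

theorem IsImage.symm (hS : S.IsSymm) {T : C} {x y : T ⟶ A} (h : E.Rel x y) : E.Rel y x :=
  hE.rel_induction hC h fun _ _ hn => hE.rel (hn.pow_symm hS).reflTransGen

theorem IsImage.trans {T : C} {x y z : T ⟶ A} (h : E.Rel x y) (h' : E.Rel y z) : E.Rel x z :=
  hE.rel_induction hC h fun v _ hn => by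
    simpa using hE.rel_induction hC (h'.precomp v) fun v' _ hm =>
      hE.rel ((hn.precomp v').pow_add (by simpa using hm)).reflTransGen

end EndoSpan

/-! ## Pullback stability of coequalizers -/

open EndoSpan

theorem comp_eq_comp_of_isPullback_of_rel_pow {A Q A' Q' W : C} {S : EndoSpan A} {q : A ⟶ Q}
    (hS : S.l ≫ q = S.r ≫ q) {ρ : A' ⟶ A} {q' : A' ⟶ Q'} {f : Q' ⟶ Q}
    (hpb : IsPullback ρ q' q f) {k : A' ⟶ W}
    (hk : ∀ ⦃T : C⦄ (y₁ y₂ : T ⟶ A'), y₁ ≫ q' = y₂ ≫ q' → S.Rel (y₁ ≫ ρ) (y₂ ≫ ρ) →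
      y₁ ≫ k = y₂ ≫ k)
    (n : ℕ) {T : C} (y₁ y₂ : T ⟶ A') (hy : y₁ ≫ q' = y₂ ≫ q')
    (h : (S.pow n).Rel (y₁ ≫ ρ) (y₂ ≫ ρ)) : y₁ ≫ k = y₂ ≫ k := by
  induction n generalizing y₂ with
  | zero => rw [hpb.hom_ext (rel_id_iff.1 h) hy]
  | succ n ih =>
    obtain ⟨x, hx, hx'⟩ := rel_comp_iff.1 h
    have hxq : x ≫ q = (y₁ ≫ q') ≫ f := by
      rw [← hx.comp_eq_comp_of_pow hS, Category.assoc, Category.assoc, hpb.w]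
    let y := hpb.lift x (y₁ ≫ q') hxq
    rw [ih y (by simp [y]) (by simpa [y] using hx),
      hk y y₂ (by simp [y, hy]) (by simpa [y] using hx')]

namespace IsExactWithUniversalCoproducts

variable (hC : IsExactWithUniversalCoproducts C) [∀ J : Type v, HasColimitsOfShape (Discrete J) C]
include hC

theorem exists_isRegularEpi_rel_of_isColimit {A Q : C} (S : EndoSpan A) {q : A ⟶ Q}
    {wq : S.l ≫ q = S.r ≫ q} (hq : IsColimit (Cofork.ofπ q wq)) {T : C} {a b : T ⟶ A}
    (hab : a ≫ q = b ≫ q) :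
    ∃ (T' : C) (p : T' ⟶ T), IsRegularEpi p ∧
      S.symmClosure.reflTransGen.Rel (p ≫ a) (p ≫ b) := by
  obtain ⟨E, hE⟩ := exists_isImage hC S.symmClosure.reflTransGen
  obtain ⟨Q', c, wc, -, hiso⟩ := hC.effective
    { X₀ := A, X₁ := E.X, d₀ := E.l, d₁ := E.r, mono := hE.mono, refl := fun _ => hE.refl,
      symm := fun _ _ _ => hE.symm hC (isSymm_symmClosure S),
      trans := fun _ _ _ _ => hE.trans hC }
  have hSc : S.l ≫ c = S.r ≫ c := by
    obtain ⟨w, hl, hr⟩ := hE.rel (rel_pow_one (Rel.symmClosure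
      ⟨𝟙 S.X, Category.id_comp _, Category.id_comp _⟩)).reflTransGen
    rw [← hl, ← hr, Category.assoc, Category.assoc]
    exact congrArg (w ≫ ·) wc
  obtain ⟨t, rfl⟩ : ∃ t, q ≫ t = c := ⟨_, Cofork.IsColimit.π_desc' hq c hSc⟩
  have hker : IsPullback E.l E.r (q ≫ t) (q ≫ t) :=
    .of_iso_pullback ⟨wc⟩ (@asIso _ _ _ _ _ hiso)
      (pullback.lift_fst _ _ _) (pullback.lift_snd _ _ _)
  exact hE.exists_isRegularEpi_rel hC
    ⟨hker.lift a b (by rw [reassoc_of% hab]), by simp, by simp⟩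

/-- Pullbacks of coequalizers are coequalizers, in the form: a morphism `k` that identifies the
`q'`-equal points lying over generating pairs is constant on the fibres of `q'`. -/
theorem comp_eq_comp_of_isPullback {A Q A' Q' W : C} (S : EndoSpan A) {q : A ⟶ Q}
    {wq : S.l ≫ q = S.r ≫ q} (hq : IsColimit (Cofork.ofπ q wq)) {ρ : A' ⟶ A} {q' : A' ⟶ Q'}
    {f : Q' ⟶ Q} (hpb : IsPullback ρ q' q f) {k : A' ⟶ W}
    (hk : ∀ ⦃T : C⦄ (y₁ y₂ : T ⟶ A'), y₁ ≫ q' = y₂ ≫ q' → S.Rel (y₁ ≫ ρ) (y₂ ≫ ρ) →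
      y₁ ≫ k = y₂ ≫ k)
    {T : C} (y₁ y₂ : T ⟶ A') (hy : y₁ ≫ q' = y₂ ≫ q') : y₁ ≫ k = y₂ ≫ k := by
  have hk' : ∀ ⦃T : C⦄ (y₁ y₂ : T ⟶ A'), y₁ ≫ q' = y₂ ≫ q' →
      S.symmClosure.Rel (y₁ ≫ ρ) (y₂ ≫ ρ) → y₁ ≫ k = y₂ ≫ k := by
    rintro T y₁ y₂ hy ⟨w, hl, hr⟩
    refine hC.hom_ext_of_sigma w fun ⟨b⟩ P u v huw => ?_
    have hl' := huw =≫ S.symmClosure.l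
    have hr' := huw =≫ S.symmClosure.r
    simp only [Category.assoc, Sigma.ι_desc, hl, hr] at hl' hr'
    cases b
    · simpa using
        (hk (v ≫ y₂) (v ≫ y₁) (by simp [hy]) ⟨u, by simpa using hr', by simpa using hl'⟩).symm
    · simpa using hk (v ≫ y₁) (v ≫ y₂) (by simp [hy]) ⟨u, by simpa using hl', by simpa using hr'⟩
  obtain ⟨T', p, hp, w, hl, hr⟩ := hC.exists_isRegularEpi_rel_of_isColimit S hq
    (a := y₁ ≫ ρ) (b := y₂ ≫ ρ) (by simp only [Category.assoc, hpb.w, reassoc_of% hy])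
  rw [← cancel_epi p]
  refine hC.hom_ext_of_sigma w fun ⟨n⟩ P u v huw => ?_
  have hl' := huw =≫ S.symmClosure.reflTransGen.l
  have hr' := huw =≫ S.symmClosure.reflTransGen.r
  simp only [Category.assoc, Sigma.ι_desc, hl, hr] at hl' hr'
  simpa using comp_eq_comp_of_isPullback_of_rel_pow (symmClosure_l_comp_eq wq) hpb hk' n
    (v ≫ p ≫ y₁) (v ≫ p ≫ y₂) (by simp [hy]) ⟨u, by simpa using hl', by simpa using hr'⟩

end IsExactWithUniversalCoproducts

/-! ## Colimits as coequalizers -/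

variable [∀ J : Type v, HasColimitsOfShape (Discrete J) C] {J : Type v} [SmallCategory J]

noncomputable abbrev generators (F : J ⥤ C) : EndoSpan (∐ F.obj) where
  X := ∐ fun a : Σ i j : J, i ⟶ j => F.obj a.1
  l := Sigma.desc fun a => Sigma.ι F.obj a.1
  r := Sigma.desc fun a => F.map a.2.2 ≫ Sigma.ι F.obj a.2.1

omit [HasFiniteLimits C] in
theorem generators_l_comp_sigmaDesc {F : J ⥤ C} (c : Cocone F) :
    (generators F).l ≫ Sigma.desc c.ι.app = (generators F).r ≫ Sigma.desc c.ι.app := by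
  apply Sigma.hom_ext
  rintro ⟨i, j, φ⟩
  simp

noncomputable def isColimitCoforkGenerators {F : J ⥤ C} {c : Cocone F} (hc : IsColimit c) :
    IsColimit (Cofork.ofπ (Sigma.desc c.ι.app) (generators_l_comp_sigmaDesc c)) :=
  Cofork.IsColimit.mk' _ fun s => by
    have hs {i j : J} (φ : i ⟶ j) : F.map φ ≫ Sigma.ι F.obj j ≫ s.π = Sigma.ι F.obj i ≫ s.π := by
      simpa using (Sigma.ι _ ⟨i, j, φ⟩ ≫= s.condition).symm
    let t : Cocone F := ⟨s.pt, ⟨fun j => Sigma.ι F.obj j ≫ s.π, fun i j φ => by simp [hs]⟩⟩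
    refine ⟨hc.desc t, Sigma.hom_ext _ _ fun j => by simp [hc.fac t j, t],
      fun {m} hm => hc.hom_ext fun j => ?_⟩
    simp [hc.fac t j, t, ← hm]

noncomputable def isColimitOfEffectiveEpi {F : J ⥤ C} (c : Cocone F)
    [EffectiveEpi (Sigma.desc c.ι.app)]
    (H : ∀ (s : Cocone F) {T : C} (y₁ y₂ : T ⟶ ∐ F.obj),
      y₁ ≫ Sigma.desc c.ι.app = y₂ ≫ Sigma.desc c.ι.app →
      y₁ ≫ Sigma.desc s.ι.app = y₂ ≫ Sigma.desc s.ι.app) :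
    IsColimit c where
  desc s := EffectiveEpi.desc _ _ (H s)
  fac s j := by
    rw [← Sigma.ι_desc c.ι.app j, Category.assoc, EffectiveEpi.fac, Sigma.ι_desc]
  uniq s m hm := by
    rw [← cancel_epi (Sigma.desc c.ι.app), EffectiveEpi.fac]
    ext j
    simp [hm]

namespace IsExactWithUniversalCoproducts

variable (hC : IsExactWithUniversalCoproducts C)
include hC

/-- Over a generating pair `(x, F.map φ x)`, two points of `∐ F'.obj` with the same image in
`c'.pt` are `ξ` and `F'.map φ ξ` for a single `ξ`, so every cocone over `F'` agrees on them. -/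
theorem comp_eq_comp_of_rel_generators {F F' : J ⥤ C} {c : Cocone F} {c' : Cocone F'}
    {α : F' ⟶ F} {f : c'.pt ⟶ c.pt} (hsq : ∀ j, IsPullback (c'.ι.app j) (α.app j) f (c.ι.app j))
    (hpb : IsPullback (Limits.Sigma.map α.app) (Sigma.desc c'.ι.app) (Sigma.desc c.ι.app) f)
    (s : Cocone F') ⦃T : C⦄ (y₁ y₂ : T ⟶ ∐ F'.obj)
    (hy : y₁ ≫ Sigma.desc c'.ι.app = y₂ ≫ Sigma.desc c'.ι.app)
    (h : (generators F).Rel (y₁ ≫ Limits.Sigma.map α.app) (y₂ ≫ Limits.Sigma.map α.app)) :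
    y₁ ≫ Sigma.desc s.ι.app = y₂ ≫ Sigma.desc s.ι.app := by
  obtain ⟨w, hl, hr⟩ := h
  refine hC.hom_ext_of_sigma w fun ⟨i, j, φ⟩ P u v huw => ?_
  have hl' := huw =≫ (generators F).l
  have hr' := huw =≫ (generators F).r
  rw [Category.assoc, Category.assoc, hl] at hl'
  rw [Category.assoc, Category.assoc, hr] at hr'
  simp only [Sigma.ι_desc] at hl' hr'
  obtain ⟨ξ, hξc, hξα⟩ : ∃ ξ : P ⟶ F'.obj i, ξ ≫ c'.ι.app i = v ≫ y₁ ≫ Sigma.desc c'.ι.app ∧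
      ξ ≫ α.app i = u :=
    ⟨(hsq i).lift (v ≫ y₁ ≫ Sigma.desc c'.ι.app) u (by simp [← hpb.w, ← reassoc_of% hl']),
      by simp, by simp⟩
  have e₁ : v ≫ y₁ = ξ ≫ Sigma.ι F'.obj i :=
    hpb.hom_ext (by simp [reassoc_of% hξα, hl']) (by simp [hξc])
  have e₂ : v ≫ y₂ = ξ ≫ F'.map φ ≫ Sigma.ι F'.obj j :=
    hpb.hom_ext (by simp [reassoc_of% hξα, hr']) (by simp [hξc, hy])
  simp [reassoc_of% e₁, reassoc_of% e₂]

theorem isUniversalColimit {F : J ⥤ C} {c : Cocone F} (hc : IsColimit c) :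
    IsUniversalColimit c := by
  intro F' c' α f _ _ hsq
  have hpb := hC.isPullback_sigmaMap c.ι.app c'.ι.app α.app f fun j => (hsq j).flip
  have : IsRegularEpi (Sigma.desc c.ι.app) := ⟨⟨⟨_, _, _, _, isColimitCoforkGenerators hc⟩⟩⟩
  have : IsRegularEpi (Sigma.desc c'.ι.app) := hC.isRegularEpi_of_isPullback hpb
  exact ⟨isColimitOfEffectiveEpi c' fun s {_} y₁ y₂ hy => hC.comp_eq_comp_of_isPullback _
    (isColimitCoforkGenerators hc) hpb (hC.comp_eq_comp_of_rel_generators hsq hpb s) y₁ y₂ hy⟩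

end IsExactWithUniversalCoproducts

end InfinitaryPretopos

/-- in an infinitary pretopos, all small colimits are universal: any
colimit cocone of a small diagram is stable under pullback.  In particular,
coequalizers of arbitrary parallel pairs are stable under pullback. -/
theorem colimits_universal_of_infinitary_pretopos
    [∀ J : Type v, HasColimitsOfShape (Discrete J) C]
    (hdisj : Nonempty (CoproductsDisjoint C))
    (huniv : ∀ {J : Type v} (F : Discrete J ⥤ C) (c : Cocone F),
      IsColimit c → IsUniversalColimit c)
    (heff : ∀ A : EqGpd C, ∃ (Q : C) (q : A.X₀ ⟶ Q) (w : A.d₀ ≫ q = A.d₁ ≫ q),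
      Nonempty (IsColimit (Cofork.ofπ q w)) ∧ IsIso (pullback.lift A.d₀ A.d₁ w))
    (hstab : ∀ {X Y Z : C} (f : X ⟶ Y) (g : Z ⟶ Y),
      IsEffectiveEpi C f → IsEffectiveEpi C (pullback.snd f g)) :
    (∀ (J : Type v) [SmallCategory J] (F : J ⥤ C) (c : Cocone F),
      IsColimit c → IsUniversalColimit c) ∧
    (∀ {X Y : C} (f g : X ⟶ Y) (c : Cofork f g),
      IsColimit c → IsUniversalColimit c) := by
  have hC : InfinitaryPretopos.IsExactWithUniversalCoproducts C := ⟨huniv, heff, hstab⟩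
  refine ⟨fun J _ F c hc => hC.isUniversalColimit hc, fun f g c hc => ?_⟩
  let e := (AsSmall.equiv (C := WalkingParallelPair)).symm
  exact (IsUniversalColimit.whiskerEquivalence_iff e).1
    (hC.isUniversalColimit (hc.whiskerEquivalence e))
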